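/- arXiv:1808.09017 — 4 statements merged into one kernel-verified Lean document; each statement's English description precedes it below -/
import Mathlib

section
/- For any constant β > 1, the infimum of ∫₀^∞ (1 - f(t))² t^{-β} dt over all nonnegative functions f : (0,∞) → [0,∞) with ∫₀^∞ f(t)² dt = 1 equals ((β-1)^{β-1}/β^β)·(π/β / sin(π/β))^β. -/
/-!
Completing the square pointwise: for `λ ≥ 0` and `t > 0`,
`(1 - x)² t^{-β} + λ x² = λ / (1 + λ t^β) + (remainder ≥ 0)`, the remainder vanishing exactly
at `x = 1 / (1 + λ t^β)`. Integrating, every admissible `f` has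
`∫ (1 - f)² t^{-β} ≥ λ ∫ (1 + λ t^β)⁻¹ - λ`, with equality for `f = (1 + λ t^β)⁻¹`; choosing
`λ` so that this minimiser has unit `L²` norm makes the bound attained. With `λ = A^β`, both
integrals reduce by scaling to `∫₀^∞ (1 + t^β)⁻¹ dt = (π/β) / sin (π/β)` (a beta integral,
evaluated by the reflection formula) and `∫₀^∞ (1 + t^β)⁻² dt = (β - 1)/β · ∫₀^∞ (1 + t^β)⁻¹ dt`
(integration by parts).
-/

open MeasureTheory Set Real Filter Topology ENNReal

theorem integral_rpow_sub_one_mul_one_sub_rpow_neg {s : ℝ} (hs₀ : 0 < s) (hs₁ : s < 1) :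
    ∫ x in (0:ℝ)..1, x ^ (s - 1) * (1 - x) ^ (-s) = π / sin (π * s) := by
  have hbeta : Complex.betaIntegral s (1 - s) = ((π / sin (π * s) : ℝ) : ℂ) := by
    have h := Complex.Gamma_mul_Gamma_eq_betaIntegral (s := (s : ℂ)) (t := ((1 - s : ℝ) : ℂ))
      (by simpa using hs₀) (by simpa using hs₁)
    push_cast at h
    rw [add_sub_cancel, Complex.Gamma_one, one_mul] at h
    rw [← h, show (1 : ℂ) - s = ((1 - s : ℝ) : ℂ) by push_cast; ring,
      Complex.Gamma_ofReal, Complex.Gamma_ofReal, ← Complex.ofReal_mul,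
      Real.Gamma_mul_Gamma_one_sub]
  have hintegrand : ∀ x ∈ uIcc (0:ℝ) 1,
      (x : ℂ) ^ ((s : ℂ) - 1) * (1 - (x : ℂ)) ^ ((1 - s : ℂ) - 1)
        = ((x ^ (s - 1) * (1 - x) ^ (-s) : ℝ) : ℂ) := by
    intro x hx
    rw [uIcc_of_le zero_le_one] at hx
    rw [Complex.ofReal_mul, Complex.ofReal_cpow hx.1, Complex.ofReal_cpow (by linarith [hx.2])]
    push_cast
    ring_nf
  rw [Complex.betaIntegral, intervalIntegral.integral_congr hintegrand,
    intervalIntegral.integral_ofReal] at hbeta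
  exact_mod_cast hbeta

theorem integral_Ioi_rpow_sub_one_div_one_add {s : ℝ} (hs₀ : 0 < s) (hs₁ : s < 1) :
    ∫ u in Ioi (0:ℝ), u ^ (s - 1) / (1 + u) = π / sin (π * s) := by
  set φ : ℝ → ℝ := fun u => u / (1 + u)
  have himage : φ '' Ioi 0 = Ioo 0 1 := by
    ext x
    constructor
    · rintro ⟨u, hu : 0 < u, rfl⟩
      exact ⟨by positivity, (div_lt_one (by positivity)).2 (by linarith)⟩
    · rintro ⟨hx₀, hx₁⟩
      refine ⟨x / (1 - x), div_pos hx₀ (by linarith), ?_⟩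
      simp only [φ]
      field_simp
      ring
  have hderiv : ∀ u ∈ Ioi (0:ℝ), HasDerivWithinAt φ ((1 + u) ^ 2)⁻¹ (Ioi 0) u := by
    intro u (hu : 0 < u)
    have h : HasDerivAt φ _ u :=
      (hasDerivAt_id' u).fun_div ((hasDerivAt_id' u).const_add 1) (by positivity)
    exact h.hasDerivWithinAt.congr_deriv (by ring)
  have hinj : InjOn φ (Ioi 0) := by
    intro a (ha : 0 < a) b (hb : 0 < b) hab
    simp only [φ] at hab
    field_simp at hab
    linarith
  have h := integral_image_eq_integral_abs_deriv_smul measurableSet_Ioi hderiv hinj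
    (fun x => x ^ (s - 1) * (1 - x) ^ (-s))
  rw [himage, ← integral_Ioc_eq_integral_Ioo, ← intervalIntegral.integral_of_le zero_le_one,
    integral_rpow_sub_one_mul_one_sub_rpow_neg hs₀ hs₁] at h
  rw [h]
  refine setIntegral_congr_fun measurableSet_Ioi fun u (hu : 0 < u) => ?_
  have h1u : 0 < 1 + u := by positivity
  have hsub : 1 - u / (1 + u) = (1 + u)⁻¹ := by field_simp; ring
  simp only [φ, smul_eq_mul]
  rw [hsub, div_rpow hu.le h1u.le, abs_of_pos (by positivity), inv_rpow h1u.le, rpow_neg h1u.le,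
    inv_inv, rpow_sub h1u, Real.rpow_one]
  field_simp

theorem continuousOn_inv_one_add_rpow {β : ℝ} (hβ : 0 ≤ β) :
    ContinuousOn (fun t : ℝ => (1 + t ^ β)⁻¹) (Ici 0) :=
  ((continuous_const.add (continuous_rpow_const hβ)).continuousOn).inv₀
    fun _ ht => (add_pos_of_pos_of_nonneg one_pos (rpow_nonneg ht β)).ne'

theorem integrableOn_Ioi_inv_one_add_rpow {β : ℝ} (hβ : 1 < β) :
    IntegrableOn (fun t : ℝ => (1 + t ^ β)⁻¹) (Ioi 0) := by
  have hmeas : ∀ s ⊆ Ioi (0:ℝ), AEStronglyMeasurable (fun t : ℝ => (1 + t ^ β)⁻¹)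
      (volume.restrict s) := fun s hs =>
    (continuousOn_inv_one_add_rpow (by linarith)).aestronglyMeasurable measurableSet_Ici
      |>.mono_measure (Measure.restrict_mono (hs.trans Ioi_subset_Ici_self) le_rfl)
  rw [← Ioc_union_Ioi_eq_Ioi zero_le_one]
  refine IntegrableOn.union ?_ ?_
  · refine Integrable.mono' (integrableOn_const (C := (1:ℝ)) (by simp))
      (hmeas _ Ioc_subset_Ioi_self) ?_
    filter_upwards [ae_restrict_mem measurableSet_Ioc] with t ht
    have hpow : 0 ≤ t ^ β := rpow_nonneg ht.1.le β
    rw [norm_inv, Real.norm_of_nonneg (by positivity)]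
    exact inv_le_one_of_one_le₀ (by linarith)
  · refine Integrable.mono' (integrableOn_Ioi_rpow_of_lt (by linarith : -β < -1) one_pos)
      (hmeas _ (Ioi_subset_Ioi zero_le_one)) ?_
    filter_upwards [ae_restrict_mem measurableSet_Ioi] with t (ht : 1 < t)
    have ht₀ : 0 < t := by linarith
    rw [norm_inv, Real.norm_of_nonneg (by positivity), rpow_neg ht₀.le]
    exact inv_anti₀ (by positivity) (by linarith)

theorem integral_Ioi_inv_one_add_rpow {β : ℝ} (hβ : 1 < β) :
    ∫ t in Ioi (0:ℝ), (1 + t ^ β)⁻¹ = π / β / sin (π / β) := by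
  have hβ₀ : 0 < β := by linarith
  have hsub := integral_comp_rpow_Ioi_of_pos (g := fun u : ℝ => β⁻¹ * (u ^ (β⁻¹ - 1) / (1 + u)))
    hβ₀
  rw [integral_const_mul, ← one_div, integral_Ioi_rpow_sub_one_div_one_add (by positivity)
    ((div_lt_one hβ₀).2 hβ)] at hsub
  calc _ = _ := setIntegral_congr_fun measurableSet_Ioi fun t (ht : 0 < t) => ?_
    _ = _ := hsub
    _ = π / β / sin (π / β) := by ring_nf
  have hpow : (t ^ β) ^ (1 / β - 1) = t ^ (1 - β) := by
    rw [← rpow_mul ht.le]; congr 1; field_simp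
  rw [smul_eq_mul, hpow, rpow_sub_one ht.ne', rpow_sub ht, Real.rpow_one]
  field_simp

theorem integrableOn_Ioi_inv_one_add_rpow_sq {β : ℝ} (hβ : 1 < β) :
    IntegrableOn (fun t : ℝ => ((1 + t ^ β)⁻¹) ^ 2) (Ioi 0) := by
  refine Integrable.mono' (integrableOn_Ioi_inv_one_add_rpow hβ)
    ((((continuousOn_inv_one_add_rpow (by linarith)).mono Ioi_subset_Ici_self).pow 2)
      |>.aestronglyMeasurable measurableSet_Ioi) ?_
  filter_upwards [ae_restrict_mem measurableSet_Ioi] with t (ht : 0 < t)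
  have hle : (1 + t ^ β)⁻¹ ≤ 1 := inv_le_one_of_one_le₀ (by linarith [rpow_nonneg ht.le β])
  rw [Real.norm_of_nonneg (by positivity), sq]
  exact mul_le_of_le_one_right (by positivity) hle

theorem integral_Ioi_inv_one_add_rpow_sq {β : ℝ} (hβ : 1 < β) :
    ∫ t in Ioi (0:ℝ), ((1 + t ^ β)⁻¹) ^ 2 = (β - 1) / β * ∫ t in Ioi (0:ℝ), (1 + t ^ β)⁻¹ := by
  have hβ₀ : 0 < β := by linarith
  set φ : ℝ → ℝ := fun t => t * (1 + t ^ β)⁻¹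
  have hcont : ContinuousWithinAt φ (Ici 0) 0 :=
    (continuousWithinAt_id.mul ((continuousOn_inv_one_add_rpow hβ₀.le) 0 self_mem_Ici))
  have hderiv : ∀ t ∈ Ioi (0:ℝ),
      HasDerivAt φ ((1 - β) * (1 + t ^ β)⁻¹ + β * ((1 + t ^ β)⁻¹) ^ 2) t := by
    intro t (ht : 0 < t)
    have h : HasDerivAt φ _ t := (hasDerivAt_id' t).mul
      (((hasDerivAt_rpow_const (p := β) (Or.inl ht.ne')).const_add 1).inv (by positivity))
    refine h.congr_deriv ?_
    rw [rpow_sub_one ht.ne']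
    field_simp
    ring
  have hlim : Tendsto φ atTop (𝓝 0) := by
    have hdecay := tendsto_rpow_neg_atTop (by linarith : 0 < β - 1)
    refine tendsto_of_tendsto_of_tendsto_of_le_of_le' tendsto_const_nhds hdecay ?_ ?_
    · filter_upwards [eventually_gt_atTop 0] with t ht
      positivity
    · filter_upwards [eventually_gt_atTop 0] with t ht
      rw [neg_sub, rpow_sub ht, Real.rpow_one]
      exact mul_le_mul_of_nonneg_left
        (inv_anti₀ (by positivity) (by linarith)) ht.le
  have hibp := integral_Ioi_of_hasDerivAt_of_tendsto hcont hderiv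
    (((integrableOn_Ioi_inv_one_add_rpow hβ).const_mul _).add
      ((integrableOn_Ioi_inv_one_add_rpow_sq hβ).const_mul _)) hlim
  rw [integral_add ((integrableOn_Ioi_inv_one_add_rpow hβ).const_mul _)
      ((integrableOn_Ioi_inv_one_add_rpow_sq hβ).const_mul _),
    integral_const_mul, integral_const_mul] at hibp
  simp only [φ, zero_mul, sub_zero] at hibp
  rw [div_mul_eq_mul_div, eq_div_iff hβ₀.ne']
  linear_combination hibp

theorem lintegral_Ioi_ofReal_comp_rpow_mul_rpow {F : ℝ → ℝ} {A β : ℝ} (hA : 0 < A)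
    (hF : IntegrableOn (fun t => F (t ^ β)) (Ioi 0)) (hF₀ : ∀ u, 0 < u → 0 ≤ F u) :
    ∫⁻ t in Ioi (0:ℝ), ENNReal.ofReal (F (A ^ β * t ^ β))
      = ENNReal.ofReal (A⁻¹ * ∫ t in Ioi (0:ℝ), F (t ^ β)) := by
  have hscale : EqOn (fun t => F ((A * t) ^ β)) (fun t => F (A ^ β * t ^ β)) (Ioi 0) :=
    fun t (ht : 0 < t) => by simp only [mul_rpow hA.le ht.le]
  have hint : IntegrableOn (fun t => F (A ^ β * t ^ β)) (Ioi 0) := by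
    refine IntegrableOn.congr_fun ?_ hscale measurableSet_Ioi
    exact (integrableOn_Ioi_comp_mul_left_iff (fun t => F (t ^ β)) 0 hA).2 (by rwa [mul_zero])
  rw [← ofReal_integral_eq_lintegral_ofReal hint, ← setIntegral_congr_fun measurableSet_Ioi hscale,
    integral_comp_mul_left_Ioi (fun t => F (t ^ β)) 0 hA, mul_zero, smul_eq_mul]
  filter_upwards [ae_restrict_mem measurableSet_Ioi] with t (ht : 0 < t)
  exact hF₀ _ (by positivity)

theorem one_sub_sq_mul_inv_add_mul_sq {w b : ℝ} (hw : 0 < w) (hb : 0 ≤ b) (x : ℝ) :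
    (1 - x) ^ 2 * w⁻¹ + b * x ^ 2
      = b * (1 + b * w)⁻¹ + (1 + b * w) * w⁻¹ * (x - (1 + b * w)⁻¹) ^ 2 := by
  have : 0 < 1 + b * w := by positivity
  field_simp
  ring

section CompletingTheSquare

variable {α : Type*} [MeasurableSpace α] {μ : Measure α} {w : α → ℝ} {b : ℝ}

theorem lintegral_one_sub_sq_mul_inv_add_mul_sq (hw : AEMeasurable w μ)
    (hw₀ : ∀ᵐ x ∂μ, 0 < w x) (hb : 0 ≤ b) {f : α → ℝ} (hf : AEMeasurable f μ) :
    ∫⁻ x, ENNReal.ofReal ((1 - f x) ^ 2 * (w x)⁻¹) ∂μ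
        + ENNReal.ofReal b * ∫⁻ x, ENNReal.ofReal (f x ^ 2) ∂μ
      = ENNReal.ofReal b * ∫⁻ x, ENNReal.ofReal ((1 + b * w x)⁻¹) ∂μ
        + ∫⁻ x, ENNReal.ofReal ((1 + b * w x) * (w x)⁻¹ * (f x - (1 + b * w x)⁻¹) ^ 2) ∂μ := by
  simp only [← lintegral_const_mul' _ _ ofReal_ne_top]
  rw [← lintegral_add_left' (by fun_prop), ← lintegral_add_left' (by fun_prop)]
  refine lintegral_congr_ae ?_
  filter_upwards [hw₀] with x hx
  have hc : 0 < 1 + b * w x := by positivity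
  rw [← ofReal_mul hb, ← ofReal_mul hb, ← ofReal_add (by positivity) (by positivity),
    ← ofReal_add (by positivity) (by positivity), one_sub_sq_mul_inv_add_mul_sq hx hb]

theorem mul_lintegral_inv_one_add_mul_le (hw : AEMeasurable w μ)
    (hw₀ : ∀ᵐ x ∂μ, 0 < w x) (hb : 0 ≤ b) {f : α → ℝ} (hf : AEMeasurable f μ) :
    ENNReal.ofReal b * ∫⁻ x, ENNReal.ofReal ((1 + b * w x)⁻¹) ∂μ
      ≤ ∫⁻ x, ENNReal.ofReal ((1 - f x) ^ 2 * (w x)⁻¹) ∂μ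
        + ENNReal.ofReal b * ∫⁻ x, ENNReal.ofReal (f x ^ 2) ∂μ := by
  rw [lintegral_one_sub_sq_mul_inv_add_mul_sq hw hw₀ hb hf]
  exact le_self_add

theorem mul_lintegral_inv_one_add_mul_eq (hw : AEMeasurable w μ)
    (hw₀ : ∀ᵐ x ∂μ, 0 < w x) (hb : 0 ≤ b) :
    ∫⁻ x, ENNReal.ofReal ((1 - (1 + b * w x)⁻¹) ^ 2 * (w x)⁻¹) ∂μ
        + ENNReal.ofReal b * ∫⁻ x, ENNReal.ofReal (((1 + b * w x)⁻¹) ^ 2) ∂μ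
      = ENNReal.ofReal b * ∫⁻ x, ENNReal.ofReal ((1 + b * w x)⁻¹) ∂μ := by
  rw [lintegral_one_sub_sq_mul_inv_add_mul_sq hw hw₀ hb (by fun_prop)]
  simp

end CompletingTheSquare

theorem rpow_mul_inv_mul_eq {β K A : ℝ} (hβ : 1 < β) (hK : 0 < K)
    (hA : A = (β - 1) / β * K) :
    A ^ β * (A⁻¹ * K) = (β - 1) ^ (β - 1) / β ^ β * K ^ β + A ^ β := by
  have hβ₀ : 0 < β := by linarith
  have hβ₁ : 0 < β - 1 := by linarith
  subst hA
  rw [rpow_sub_one hβ₁.ne', mul_rpow (by positivity) hK.le, div_rpow hβ₁.le hβ₀.le]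
  field_simp
  ring

theorem stmt_0 (β : ℝ) (hβ : 1 < β) :
    sInf {I : ℝ≥0∞ | ∃ f : ℝ → ℝ, Measurable f ∧ (∀ t ∈ Ioi (0:ℝ), 0 ≤ f t) ∧
        (∫⁻ t in Ioi (0:ℝ), ENNReal.ofReal ((f t)^2)) = 1 ∧
        I = ∫⁻ t in Ioi (0:ℝ), ENNReal.ofReal ((1 - f t)^2 * t ^ (-β))} =
      ENNReal.ofReal ((β-1) ^ (β-1) / β ^ β * ((π/β) / Real.sin (π/β)) ^ β) := by
  have hβ₀ : 0 < β := by linarith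
  set K := π / β / sin (π / β)
  have hK : 0 < K := div_pos (by positivity)
    (sin_pos_of_pos_of_lt_pi (by positivity) (div_lt_self pi_pos hβ))
  set A := (β - 1) / β * K with hA_def
  have hA : 0 < A := mul_pos (div_pos (by linarith) hβ₀) hK
  have hw : AEMeasurable (fun t : ℝ => t ^ β) (volume.restrict (Ioi 0)) := by fun_prop
  have hw₀ : ∀ᵐ t ∂(volume.restrict (Ioi (0:ℝ))), 0 < t ^ β := by
    filter_upwards [ae_restrict_mem measurableSet_Ioi] with t (ht : 0 < t)
    positivity
  have hJ (f : ℝ → ℝ) : ∫⁻ t in Ioi (0:ℝ), ENNReal.ofReal ((1 - f t) ^ 2 * t ^ (-β))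
      = ∫⁻ t in Ioi (0:ℝ), ENNReal.ofReal ((1 - f t) ^ 2 * (t ^ β)⁻¹) :=
    setLIntegral_congr_fun measurableSet_Ioi fun t (ht : 0 < t) => by rw [rpow_neg ht.le]
  have hsq : ∫⁻ t in Ioi (0:ℝ), ENNReal.ofReal (((1 + A ^ β * t ^ β)⁻¹) ^ 2) = 1 := by
    rw [lintegral_Ioi_ofReal_comp_rpow_mul_rpow (F := fun u => ((1 + u)⁻¹) ^ 2) hA
      (integrableOn_Ioi_inv_one_add_rpow_sq hβ) fun u hu => by positivity,
      integral_Ioi_inv_one_add_rpow_sq hβ, integral_Ioi_inv_one_add_rpow hβ, ← hA_def,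
      inv_mul_cancel₀ hA.ne', ofReal_one]
  have hlin : ENNReal.ofReal (A ^ β) * ∫⁻ t in Ioi (0:ℝ), ENNReal.ofReal ((1 + A ^ β * t ^ β)⁻¹)
      = ENNReal.ofReal ((β - 1) ^ (β - 1) / β ^ β * K ^ β) + ENNReal.ofReal (A ^ β) := by
    rw [lintegral_Ioi_ofReal_comp_rpow_mul_rpow (F := fun u => (1 + u)⁻¹) hA
      (integrableOn_Ioi_inv_one_add_rpow hβ) fun u hu => by positivity,
      integral_Ioi_inv_one_add_rpow hβ, ← ofReal_mul (by positivity),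
      rpow_mul_inv_mul_eq hβ hK hA_def, ofReal_add (by positivity) (by positivity)]
  apply le_antisymm
  · refine sInf_le ⟨fun t => (1 + A ^ β * t ^ β)⁻¹, by fun_prop,
      fun t (ht : 0 < t) => by positivity, hsq, ?_⟩
    have h := mul_lintegral_inv_one_add_mul_eq hw hw₀ (rpow_nonneg hA.le β)
    rw [hsq, mul_one, hlin, ← hJ] at h
    exact ((ENNReal.add_left_inj ofReal_ne_top).1 h).symm
  · refine le_sInf ?_
    rintro _ ⟨f, hf, -, hf_sq, rfl⟩
    have h := mul_lintegral_inv_one_add_mul_le hw hw₀ (rpow_nonneg hA.le β) hf.aemeasurable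
    rw [hf_sq, mul_one, hlin, ← hJ] at h
    exact ENNReal.le_of_add_le_add_right ofReal_ne_top h
end

section
/- For any constant β > 1, the function f*(t) = 1/(1 + μ t^β) with μ = ((β-1)/β · (π/β)/sin(π/β))^β satisfies ∫₀^∞ f*(t)² dt = 1 and ∫₀^∞ (1 - f*(t))² t^{-β} dt = ((β-1)^{β-1}/β^β)·(π/β / sin(π/β))^β. -/
/-!
With `a = β⁻¹`, the substitution `x = μ t ^ β` turns both integrals into
`∫₀^∞ x^(a-1) g x dx` for `g x = (1 + x)⁻²` and `g x = x (1 + x)⁻²`, up to a power of `μ`.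
The substitution `x = u / (1 - u)` identifies these with the Beta integrals `B(a, 2 - a)` and
`B(a + 1, 1 - a)`, which are `(1 - a)` and `a` times `Γ(a) Γ(1 - a) = π / sin (π a)`.
The value of `μ` is exactly the one that makes the first integral equal to `1`.
-/

open MeasureTheory Set Real

theorem integral_Ioo_rpow_mul_one_sub_rpow {a b : ℝ} (ha : 0 < a) (hb : 0 < b) :
    ∫ x in Ioo (0:ℝ) 1, x ^ (a - 1) * (1 - x) ^ (b - 1) =
      Gamma a * Gamma b / Gamma (a + b) := by
  have hB := ProbabilityTheory.beta_eq_betaIntegralReal a b ha hb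
  rw [ProbabilityTheory.beta] at hB
  rw [hB, Complex.betaIntegral, intervalIntegral.integral_of_le zero_le_one,
    integral_Ioc_eq_integral_Ioo, ← Complex.ofReal_re (∫ x in Ioo (0:ℝ) 1, _),
    ← integral_complex_ofReal]
  congr 1
  refine setIntegral_congr_fun measurableSet_Ioo fun x ⟨hx0, hx1⟩ => ?_
  push_cast [Complex.ofReal_cpow hx0.le, Complex.ofReal_cpow (sub_nonneg.2 hx1.le)]
  rfl

theorem integral_Ioi_rpow_div_one_add_rpow {a b : ℝ} (ha : 0 < a) (hb : 0 < b) :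
    ∫ x in Ioi (0:ℝ), x ^ (a - 1) / (1 + x) ^ (a + b) = Gamma a * Gamma b / Gamma (a + b) := by
  have hderiv : ∀ u ∈ Ioo (0:ℝ) 1,
      HasDerivWithinAt (fun u => u / (1 - u)) ((1 - u) ^ 2)⁻¹ (Ioo 0 1) u := by
    rintro u ⟨-, hu1⟩
    have h1u : 1 - u ≠ 0 := sub_ne_zero.2 hu1.ne'
    refine (((hasDerivAt_id u).div ((hasDerivAt_id u).const_sub 1) h1u).congr_deriv
      ?_).hasDerivWithinAt
    simp only [id]
    field_simp
    ring
  have hinj : InjOn (fun u : ℝ => u / (1 - u)) (Ioo 0 1) := by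
    rintro u ⟨-, hu1⟩ v ⟨-, hv1⟩ huv
    have h1u : 1 - u ≠ 0 := sub_ne_zero.2 hu1.ne'
    have h1v : 1 - v ≠ 0 := sub_ne_zero.2 hv1.ne'
    field_simp at huv
    linarith
  have himage : (fun u : ℝ => u / (1 - u)) '' Ioo 0 1 = Ioi 0 := by
    refine (image_subset_iff.2 fun u hu => div_pos hu.1 (sub_pos.2 hu.2)).antisymm
      fun x (hx : 0 < x) => ⟨x / (1 + x), ⟨by positivity, ?_⟩, ?_⟩
    · rw [div_lt_one (by positivity)]; linarith
    · field_simp; ring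
  rw [← integral_Ioo_rpow_mul_one_sub_rpow ha hb, ← himage,
    integral_image_eq_integral_abs_deriv_smul measurableSet_Ioo hderiv hinj]
  refine setIntegral_congr_fun measurableSet_Ioo fun u ⟨hu0, hu1⟩ => ?_
  have h1u : 0 < 1 - u := sub_pos.2 hu1
  have hsum : 1 + u / (1 - u) = (1 - u)⁻¹ := by field_simp; ring
  have hexp : (1 - u) ^ (a + b) = (1 - u) ^ (a - 1) * (1 - u) ^ (b - 1) * (1 - u) ^ 2 := by
    rw [← rpow_add h1u, ← rpow_natCast, ← rpow_add h1u]; push_cast; ring_nf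
  rw [smul_eq_mul, abs_of_pos (by positivity), hsum, inv_rpow h1u.le, div_rpow hu0.le h1u.le, hexp]
  have : (1 - u) ^ (a - 1) ≠ 0 := by positivity
  field_simp

theorem integral_Ioi_comp_mul_rpow {E : Type*} [NormedAddCommGroup E] [NormedSpace ℝ E]
    (g : ℝ → E) {p c : ℝ} (hp : 0 < p) (hc : 0 < c) :
    ∫ t in Ioi (0:ℝ), g (c * t ^ p) =
      (p⁻¹ * c ^ (-p⁻¹)) • ∫ x in Ioi (0:ℝ), x ^ (p⁻¹ - 1) • g x := by
  set h : ℝ → E := fun y => (p⁻¹ * (c⁻¹ * y) ^ (p⁻¹ - 1)) • g y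
  rw [← integral_comp_rpow_Ioi_of_pos (inv_pos.2 hp)]
  calc ∫ x in Ioi (0:ℝ), (p⁻¹ * x ^ (p⁻¹ - 1)) • g (c * (x ^ p⁻¹) ^ p)
      = ∫ x in Ioi (0:ℝ), h (c * x) := by
        refine setIntegral_congr_fun measurableSet_Ioi fun x (hx : 0 < x) => ?_
        simp only [h, rpow_inv_rpow hx.le hp.ne', inv_mul_cancel_left₀ hc.ne']
    _ = c⁻¹ • ∫ y in Ioi (0:ℝ), h y := by
        rw [integral_comp_mul_left_Ioi h 0 hc, mul_zero]
    _ = _ := by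
        rw [← integral_smul, ← integral_smul]
        refine setIntegral_congr_fun measurableSet_Ioi fun y (hy : 0 < y) => ?_
        simp only [h]
        rw [smul_smul, smul_smul, mul_rpow (inv_pos.2 hc).le hy.le, inv_rpow hc.le,
          ← rpow_neg hc.le, ← rpow_neg_one c]
        have hexp : c ^ (-1 : ℝ) * c ^ (-(p⁻¹ - 1)) = c ^ (-p⁻¹) := by
          rw [← rpow_add hc]; ring_nf
        rw [← hexp]
        ring_nf

theorem integral_Ioi_rpow_sub_one_div_one_add_sq {a : ℝ} (ha : 0 < a) (ha1 : a < 1) :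
    ∫ x in Ioi (0:ℝ), x ^ (a - 1) / (1 + x) ^ 2 = (1 - a) * (π / sin (π * a)) := by
  have h := integral_Ioi_rpow_div_one_add_rpow ha (b := 2 - a) (by linarith)
  simp only [add_sub_cancel, rpow_two] at h
  rw [h, Gamma_two, show 2 - a = (1 - a) + 1 by ring, Gamma_add_one (by linarith),
    ← Gamma_mul_Gamma_one_sub]
  ring

theorem integral_Ioi_rpow_div_one_add_sq {a : ℝ} (ha : 0 < a) (ha1 : a < 1) :
    ∫ x in Ioi (0:ℝ), x ^ a / (1 + x) ^ 2 = a * (π / sin (π * a)) := by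
  have h := integral_Ioi_rpow_div_one_add_rpow (a := a + 1) (b := 1 - a) (by linarith)
    (by linarith)
  simp only [add_sub_cancel_right, show a + 1 + (1 - a) = 2 by ring, rpow_two] at h
  rw [h, Gamma_two, Gamma_add_one ha.ne', ← Gamma_mul_Gamma_one_sub]
  ring

theorem integral_Ioi_one_div_one_add_mul_rpow_sq {β μ : ℝ} (hβ : 1 < β) (hμ : 0 < μ) :
    ∫ t in Ioi (0:ℝ), (1 / (1 + μ * t ^ β)) ^ 2 =
      μ ^ (-β⁻¹) * ((1 - β⁻¹) * (π / β / sin (π / β))) := by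
  have hβ0 : 0 < β := by linarith
  have hinner : ∫ x in Ioi (0:ℝ), x ^ (β⁻¹ - 1) * (1 / (1 + x)) ^ 2 =
      (1 - β⁻¹) * (π / sin (π * β⁻¹)) := by
    rw [← integral_Ioi_rpow_sub_one_div_one_add_sq (inv_pos.2 hβ0) (inv_lt_one_of_one_lt₀ hβ)]
    congr 1
    ext x
    rw [div_pow, one_pow, mul_one_div]
  have h := integral_Ioi_comp_mul_rpow (fun y => (1 / (1 + y)) ^ 2) hβ0 hμ
  simp only [smul_eq_mul] at h
  rw [h, hinner, div_eq_mul_inv π β]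
  ring

theorem integral_Ioi_one_sub_one_div_one_add_mul_rpow_sq_mul_rpow_neg {β μ : ℝ} (hβ : 1 < β)
    (hμ : 0 < μ) :
    ∫ t in Ioi (0:ℝ), (1 - 1 / (1 + μ * t ^ β)) ^ 2 * t ^ (-β) =
      μ ^ (1 - β⁻¹) * (β⁻¹ * (π / β / sin (π / β))) := by
  have hβ0 : 0 < β := by linarith
  have houter : ∫ t in Ioi (0:ℝ), (1 - 1 / (1 + μ * t ^ β)) ^ 2 * t ^ (-β) =
      μ * ∫ t in Ioi (0:ℝ), μ * t ^ β / (1 + μ * t ^ β) ^ 2 := by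
    rw [← integral_const_mul]
    refine setIntegral_congr_fun measurableSet_Ioi fun t (ht : 0 < t) => ?_
    have : 0 < t ^ β := rpow_pos_of_pos ht β
    rw [rpow_neg ht.le]
    field_simp
    ring
  have hinner : ∫ x in Ioi (0:ℝ), x ^ (β⁻¹ - 1) * (x / (1 + x) ^ 2) =
      β⁻¹ * (π / sin (π * β⁻¹)) := by
    rw [← integral_Ioi_rpow_div_one_add_sq (inv_pos.2 hβ0) (inv_lt_one_of_one_lt₀ hβ)]
    refine setIntegral_congr_fun measurableSet_Ioi fun x (hx : 0 < x) => ?_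
    rw [rpow_sub_one hx.ne']
    field_simp
  have h := integral_Ioi_comp_mul_rpow (fun y => y / (1 + y) ^ 2) hβ0 hμ
  simp only [smul_eq_mul] at h
  rw [houter, h, hinner, sub_eq_add_neg, rpow_add hμ, rpow_one, div_eq_mul_inv π β]
  ring

theorem stmt_1 (β : ℝ) (hβ : 1 < β)
    (μ : ℝ) (hμ : μ = ((β-1)/β * ((π/β) / Real.sin (π/β))) ^ β)
    (f : ℝ → ℝ) (hf : ∀ t, f t = 1 / (1 + μ * t ^ β)) :
    (∫ t in Ioi (0:ℝ), (f t)^2) = 1 ∧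
    (∫ t in Ioi (0:ℝ), (1 - f t)^2 * t ^ (-β)) =
      (β-1) ^ (β-1) / β ^ β * ((π/β) / Real.sin (π/β)) ^ β := by
  have hβ0 : 0 < β := by linarith
  have hβ1 : 0 < β - 1 := by linarith
  have hs0 : 0 < π / β / sin (π / β) :=
    div_pos (by positivity) (sin_pos_of_pos_of_lt_pi (by positivity) (div_lt_self pi_pos hβ))
  have hc0 : 0 < (β - 1) / β * (π / β / sin (π / β)) := by positivity
  have hμ0 : 0 < μ := hμ ▸ rpow_pos_of_pos hc0 β
  obtain rfl : f = fun t => 1 / (1 + μ * t ^ β) := funext hf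
  rw [integral_Ioi_one_div_one_add_mul_rpow_sq hβ hμ0,
    integral_Ioi_one_sub_one_div_one_add_mul_rpow_sq_mul_rpow_neg hβ hμ0]
  generalize π / β / sin (π / β) = s at hs0 hc0 hμ ⊢
  subst hμ
  rw [← rpow_mul hc0.le, ← rpow_mul hc0.le, mul_neg, mul_inv_cancel₀ hβ0.ne', rpow_neg_one,
    mul_one_sub, mul_inv_cancel₀ hβ0.ne', mul_rpow (by positivity) hs0.le,
    div_rpow hβ1.le hβ0.le, rpow_sub_one hs0.ne', rpow_sub_one hβ0.ne']
  constructor <;> field_simp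
end

section
/- Let H be a Hilbert space and γ a bounded self-adjoint operator on H with 0 ≤ γ ≤ 1. Then for any bounded self-adjoint operator F on H and any ε > 0, γ ≤ (1+ε) F γ F + (1+1/ε)(1-F)². -/
/-!
Write `G = 1 - F` and `S = ε F - G`. Since `F + G = 1`, expanding `γ = (F + G) γ (F + G)` gives
`(1 + ε) F γ F + (1 + ε⁻¹) G² - γ = ε⁻¹ S γ S + (1 + ε⁻¹) G (1 - γ) G`,
and both terms on the right are nonnegative multiples of conjugates of `γ ≥ 0` and `1 - γ ≥ 0`.
-/

open ContinuousLinearMap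

section StarOrderedAlgebra

variable {A : Type*} [Ring A] [Algebra ℝ A]

lemma smul_conj_add_smul_one_sub_sq_sub_eq (F γ : A) {ε : ℝ} (hε : ε ≠ 0) :
    (1 + ε) • (F * γ * F) + (1 + ε⁻¹) • ((1 - F) * (1 - F)) - γ =
      ε⁻¹ • ((ε • F - (1 - F)) * γ * (ε • F - (1 - F))) +
        (1 + ε⁻¹) • ((1 - F) * (1 - γ) * (1 - F)) := by
  simp only [sub_mul, mul_sub, smul_mul_assoc, mul_smul_comm, one_mul, mul_one]
  match_scalars <;> field_simp <;> ring

variable [StarRing A] [PartialOrder A] [StarOrderedRing A] [StarModule ℝ A] [PosSMulMono ℝ A]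

theorem le_smul_conj_add_smul_one_sub_sq {γ F : A} (hγ₀ : 0 ≤ γ) (hγ₁ : γ ≤ 1)
    (hF : IsSelfAdjoint F) {ε : ℝ} (hε : 0 < ε) :
    γ ≤ (1 + ε) • (F * γ * F) + (1 + ε⁻¹) • ((1 - F) * (1 - F)) := by
  have hG : IsSelfAdjoint (1 - F) := .sub (.one A) hF
  have hS : IsSelfAdjoint (ε • F - (1 - F)) := .sub ((IsSelfAdjoint.all ε).smul hF) hG
  rw [← sub_nonneg, smul_conj_add_smul_one_sub_sq_sub_eq F γ hε.ne']
  exact add_nonneg (smul_nonneg (by positivity) (hS.conjugate_nonneg hγ₀))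
    (smul_nonneg (by positivity) (hG.conjugate_nonneg (sub_nonneg.mpr hγ₁)))

end StarOrderedAlgebra

theorem stmt_6 {H : Type*} [NormedAddCommGroup H] [InnerProductSpace ℂ H] [CompleteSpace H]
    (γ F : H →L[ℂ] H) (hγpos : γ.IsPositive) (hγle : ((1 : H →L[ℂ] H) - γ).IsPositive)
    (hF : IsSelfAdjoint F) (ε : ℝ) (hε : 0 < ε) :
    ((1 + ε) • (F ∘L γ ∘L F) + (1 + ε⁻¹) • (((1 : H →L[ℂ] H) - F) ∘L ((1 : H →L[ℂ] H) - F))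
      - γ).IsPositive :=
  le_smul_conj_add_smul_one_sub_sq ((nonneg_iff_isPositive γ).mpr hγpos) hγle hF hε
end

section
/- In dimension d = 1, the constant C₁ := inf { (∫₀^∞ φ²)^{1/2} · (1/2)∫₀^∞ (1 − ∫₀^∞ φ(s) f(st) ds)² t^{-3/2} dt }, with infimum over measurable f, φ : (0,∞) → [0,∞) satisfying ∫₀^∞ f² = ∫₀^∞ φ = 1, satisfies C₁ ≥ 1/3. -/
/-!
Cauchy–Schwarz and the scaling `∫ f(st)² ds = t⁻¹ ∫ f²` give `g(t) := ∫ φ(s) f(st) ds ≤ √(a/t)`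
with `a = ∫ φ²`. Hence `(1 - g t)² ≥ (1 - √(a/t))²` for `t > a`, and against `t^{-3/2}` the right
side integrates to `2 / (3 √a)` (an antiderivative is `(2 / (3 √a)) (1 - √(a/t))³`), which yields
exactly `1/3`.

If `∫ φ² = ∞` it remains to see that `g = 1` a.e. is impossible. Averaging that identity over
`t ∈ [x, 4x]` gives `∫ φ(s) M(sx) ds = 3` for every `x > 0`, where `M y = y⁻¹ ∫_y^{4y} f`.
Comparing windows over a block `[c, 2c]` carrying mass of `φ` shows that `M` is bounded, while
Cauchy–Schwarz gives `M y ≤ √(3/y) ‖f‖₂ → 0`, so dominated convergence forces `3 = 0`.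
-/

open MeasureTheory Set Real ENNReal Filter Topology

lemma lintegral_ofReal_eq_ofReal_integral {α : Type*} [MeasurableSpace α] {μ : Measure α}
    {h : α → ℝ} (h0 : 0 ≤ᵐ[μ] h) (hne : ∫ a, h a ∂μ ≠ 0) :
    ∫⁻ a, ENNReal.ofReal (h a) ∂μ = ENNReal.ofReal (∫ a, h a ∂μ) :=
  (ofReal_integral_eq_lintegral_ofReal (Integrable.of_integral_ne_zero hne) h0).symm

lemma ofReal_integral_le_lintegral_ofReal {α : Type*} [MeasurableSpace α] {μ : Measure α}
    {h : α → ℝ} (h0 : 0 ≤ᵐ[μ] h) :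
    ENNReal.ofReal (∫ a, h a ∂μ) ≤ ∫⁻ a, ENNReal.ofReal (h a) ∂μ := by
  rcases eq_or_ne (∫ a, h a ∂μ) 0 with hzero | hne
  · simp [hzero]
  · exact (lintegral_ofReal_eq_ofReal_integral h0 hne).ge

lemma lintegral_ofReal_sq_ne_zero {α : Type*} [MeasurableSpace α] {μ : Measure α} {φ : α → ℝ}
    (hφ : AEMeasurable φ μ) (h : ∫ a, φ a ∂μ ≠ 0) : ∫⁻ a, ENNReal.ofReal (φ a ^ 2) ∂μ ≠ 0 := by
  rw [Ne, lintegral_eq_zero_iff' (hφ.pow_const 2).ennreal_ofReal]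
  refine fun h0 => h (integral_eq_zero_of_ae ?_)
  filter_upwards [h0] with a ha
  simpa using ha

lemma lintegral_mul_le_L2_mul_L2 {α : Type*} [MeasurableSpace α] (μ : Measure α)
    {f g : α → ℝ≥0∞} (hf : AEMeasurable f μ) (hg : AEMeasurable g μ) :
    ∫⁻ a, f a * g a ∂μ ≤ (∫⁻ a, f a ^ 2 ∂μ) ^ (1/2 : ℝ) * (∫⁻ a, g a ^ 2 ∂μ) ^ (1/2 : ℝ) := by
  simpa only [ENNReal.rpow_two, Pi.mul_apply] using
    ENNReal.lintegral_mul_le_Lp_mul_Lq μ Real.HolderConjugate.two_two hf hg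

lemma setLIntegral_preimage_comp_mul_left {c : ℝ} (hc : c ≠ 0) (G : ℝ → ℝ≥0∞) (S : Set ℝ) :
    ∫⁻ v in (c * ·) ⁻¹' S, G (c * v) = ENNReal.ofReal |c⁻¹| * ∫⁻ u in S, G u := by
  have he : MeasurableEmbedding (c * · : ℝ → ℝ) := (Homeomorph.mulLeft₀ c hc).measurableEmbedding
  rw [← he.lintegral_map, ← he.restrict_map, Real.map_volume_mul_left hc, Measure.restrict_smul,
    lintegral_smul_measure, smul_eq_mul]

lemma setLIntegral_Ioi_comp_mul_left {c : ℝ} (hc : 0 < c) (G : ℝ → ℝ≥0∞) :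
    ∫⁻ v in Ioi 0, G (c * v) = ENNReal.ofReal c⁻¹ * ∫⁻ u in Ioi 0, G u := by
  rw [← abs_of_pos (inv_pos.2 hc), ← setLIntegral_preimage_comp_mul_left hc.ne',
    preimage_const_mul_Ioi₀ _ hc, zero_div]

lemma setLIntegral_Icc_comp_mul_left {c : ℝ} (hc : 0 < c) (G : ℝ → ℝ≥0∞) (p q : ℝ) :
    ∫⁻ v in Icc p q, G (c * v) = ENNReal.ofReal c⁻¹ * ∫⁻ u in Icc (c * p) (c * q), G u := by
  rw [← abs_of_pos (inv_pos.2 hc), ← setLIntegral_preimage_comp_mul_left hc.ne',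
    preimage_const_mul_Icc₀ _ _ hc, mul_div_cancel_left₀ _ hc.ne', mul_div_cancel_left₀ _ hc.ne']

lemma setLIntegral_mul_comp_mul_le {F Φ : ℝ → ℝ≥0∞} (hF : Measurable F) (hΦ : Measurable Φ)
    {t : ℝ} (ht : 0 < t) :
    ∫⁻ s in Ioi 0, Φ s * F (s * t) ≤ (∫⁻ s in Ioi 0, Φ s ^ 2) ^ (1/2 : ℝ) *
      (∫⁻ u in Ioi 0, F u ^ 2) ^ (1/2 : ℝ) * ENNReal.ofReal (t ^ (-(1/2) : ℝ)) := by
  have hscale : ∫⁻ s in Ioi 0, F (s * t) ^ 2 = ENNReal.ofReal t⁻¹ * ∫⁻ u in Ioi 0, F u ^ 2 := by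
    simp_rw [mul_comm _ t]
    exact setLIntegral_Ioi_comp_mul_left ht (fun u => F u ^ 2)
  calc ∫⁻ s in Ioi 0, Φ s * F (s * t)
      ≤ (∫⁻ s in Ioi 0, Φ s ^ 2) ^ (1/2 : ℝ) * (∫⁻ s in Ioi 0, F (s * t) ^ 2) ^ (1/2 : ℝ) :=
        lintegral_mul_le_L2_mul_L2 _ hΦ.aemeasurable (hF.comp (measurable_mul_const t)).aemeasurable
    _ = _ := by
        rw [hscale, ENNReal.mul_rpow_of_nonneg _ _ (by norm_num), ENNReal.ofReal_rpow_of_nonneg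
          (inv_nonneg.2 ht.le) (by norm_num), Real.inv_rpow ht.le, ← Real.rpow_neg ht.le]
        ring

lemma setLIntegral_Ioi_sq_one_sub_mul_rpow {r : ℝ} (hr : 0 < r) :
    ∫⁻ t in Ioi (r ^ 2), ENNReal.ofReal ((1 - r * t ^ (-(1/2) : ℝ)) ^ 2 * t ^ (-(3/2) : ℝ))
      = ENNReal.ofReal (2 / (3 * r)) := by
  have hderiv : ∀ t ∈ Ici (r ^ 2),
      HasDerivAt (fun t => 2 / (3 * r) * (1 - r * t ^ (-(1/2) : ℝ)) ^ 3)
        ((1 - r * t ^ (-(1/2) : ℝ)) ^ 2 * t ^ (-(3/2) : ℝ)) t := by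
    intro t ht
    have ht0 : 0 < t := (pow_pos hr 2).trans_le ht
    refine ((((Real.hasDerivAt_rpow_const (p := -(1/2)) (Or.inl ht0.ne')).const_mul r).const_sub
      1).pow 3 |>.const_mul (2 / (3 * r))).congr_deriv ?_
    rw [show (-(1/2) : ℝ) - 1 = -(3/2) by norm_num]
    field_simp
    ring
  have hnonneg : ∀ t ∈ Ioi (r ^ 2), 0 ≤ (1 - r * t ^ (-(1/2) : ℝ)) ^ 2 * t ^ (-(3/2) : ℝ) :=
    fun t ht => by have := (pow_pos hr 2).trans ht; positivity
  have hlim : Tendsto (fun t => 2 / (3 * r) * (1 - r * t ^ (-(1/2) : ℝ)) ^ 3) atTop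
      (𝓝 (2 / (3 * r))) := by
    have h0 : Tendsto (fun t : ℝ => t ^ (-(1/2) : ℝ)) atTop (𝓝 0) :=
      tendsto_rpow_neg_atTop (by norm_num)
    simpa using ((h0.const_mul r).const_sub 1).pow 3 |>.const_mul (2 / (3 * r))
  have hroot : r * (r ^ 2) ^ (-(1/2) : ℝ) = 1 := by
    rw [Real.rpow_neg (sq_nonneg r), ← Real.sqrt_eq_rpow, Real.sqrt_sq hr.le,
      mul_inv_cancel₀ hr.ne']
  rw [← ofReal_integral_eq_lintegral_ofReal (integrableOn_Ioi_deriv_of_nonneg' hderiv hnonneg hlim)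
    ((ae_restrict_iff' measurableSet_Ioi).2 (ae_of_all _ hnonneg)),
    integral_Ioi_of_hasDerivAt_of_nonneg' hderiv hnonneg hlim, hroot]
  simp

/-- The average `y⁻¹ ∫_y^{4y} F` (see `windowAvg_eq`), written so that it is visibly measurable in
`y`. -/
noncomputable def windowAvg (F : ℝ → ℝ≥0∞) (y : ℝ) : ℝ≥0∞ := ∫⁻ v in Icc (1:ℝ) 4, F (y * v)

section windowAvg

variable {F Φ : ℝ → ℝ≥0∞}

lemma Measurable.windowAvg (hF : Measurable F) : Measurable (windowAvg F) :=
  (hF.comp (measurable_fst.mul measurable_snd)).lintegral_prod_right'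

lemma windowAvg_eq {y : ℝ} (hy : 0 < y) :
    windowAvg F y = ENNReal.ofReal y⁻¹ * ∫⁻ u in Icc y (4 * y), F u := by
  rw [windowAvg, setLIntegral_Icc_comp_mul_left hy, mul_one, mul_comm y 4]

lemma windowAvg_le (hF : Measurable F) {y : ℝ} (hy : 0 < y) :
    windowAvg F y ≤ (ENNReal.ofReal y⁻¹ * ∫⁻ u in Ioi 0, F u ^ 2) ^ (1/2 : ℝ) * 3 ^ (1/2 : ℝ) := by
  calc windowAvg F y = ∫⁻ v in Icc (1:ℝ) 4, F (y * v) * 1 := by simp_rw [mul_one]; rfl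
    _ ≤ (∫⁻ v in Icc (1:ℝ) 4, F (y * v) ^ 2) ^ (1/2 : ℝ) *
          (∫⁻ v in Icc (1:ℝ) 4, 1 ^ 2) ^ (1/2 : ℝ) :=
        lintegral_mul_le_L2_mul_L2 _ (hF.comp (measurable_const_mul y)).aemeasurable
          aemeasurable_const
    _ ≤ (∫⁻ v in Ioi 0, F (y * v) ^ 2) ^ (1/2 : ℝ) * 3 ^ (1/2 : ℝ) := by
        gcongr
        · exact fun v hv => zero_lt_one.trans_le hv.1
        · norm_num
    _ = _ := by rw [setLIntegral_Ioi_comp_mul_left hy (fun u => F u ^ 2)]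

lemma tendsto_windowAvg_atTop (hF : Measurable F) (hF2 : ∫⁻ u in Ioi 0, F u ^ 2 ≠ ∞) :
    Tendsto (windowAvg F) atTop (𝓝 0) := by
  have hbound : Tendsto (fun y : ℝ => (ENNReal.ofReal y⁻¹ * ∫⁻ u in Ioi 0, F u ^ 2) ^ (1/2 : ℝ)
      * 3 ^ (1/2 : ℝ)) atTop (𝓝 0) := by
    have h := ENNReal.Tendsto.mul_const (ENNReal.Tendsto.mul_const
      (ENNReal.tendsto_ofReal tendsto_inv_atTop_zero) (Or.inr hF2) |>.ennrpow_const (1/2 : ℝ))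
      (Or.inr (by simp : (3:ℝ≥0∞) ^ (1/2 : ℝ) ≠ ∞))
    simpa [ENNReal.zero_rpow_of_pos] using h
  exact tendsto_of_tendsto_of_tendsto_of_le_of_le' tendsto_const_nhds hbound
    (Eventually.of_forall fun _ => bot_le)
    ((eventually_gt_atTop 0).mono fun y hy => windowAvg_le hF hy)

lemma setLIntegral_mul_windowAvg_eq_three (hF : Measurable F) (hΦ : Measurable Φ)
    (h : ∀ᵐ t ∂(volume.restrict (Ioi 0)), ∫⁻ s in Ioi 0, Φ s * F (s * t) = 1)
    {x : ℝ} (hx : 0 < x) :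
    ∫⁻ s in Ioi 0, Φ s * windowAvg F (s * x) = 3 := by
  have hscaled : ∀ᵐ v ∂(volume.restrict (Icc (1:ℝ) 4)),
      ∫⁻ s in Ioi 0, Φ s * F (s * (x * v)) = 1 := by
    have h' := (Measure.quasiMeasurePreserving_smul volume hx.ne').ae
      ((ae_restrict_iff' measurableSet_Ioi).1 h)
    filter_upwards [ae_restrict_of_ae h', ae_restrict_mem measurableSet_Icc] with v hv hvI
    exact hv (mul_pos hx (zero_lt_one.trans_le hvI.1))
  calc ∫⁻ s in Ioi 0, Φ s * windowAvg F (s * x)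
      = ∫⁻ s in Ioi 0, ∫⁻ v in Icc (1:ℝ) 4, Φ s * F (s * (x * v)) := by
        refine lintegral_congr fun s => ?_
        have hm : Measurable fun v => F (s * x * v) := hF.comp (measurable_const_mul _)
        rw [windowAvg, ← lintegral_const_mul _ hm]
        simp_rw [mul_assoc]
    _ = ∫⁻ v in Icc (1:ℝ) 4, ∫⁻ s in Ioi 0, Φ s * F (s * (x * v)) :=
        lintegral_lintegral_swap ((hΦ.comp measurable_fst).mul
          (hF.comp (measurable_fst.mul (measurable_snd.const_mul x)))).aemeasurable
    _ = ∫⁻ v in Icc (1:ℝ) 4, 1 := lintegral_congr_ae hscaled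
    _ = 3 := by norm_num

lemma exists_setLIntegral_Icc_two_mul_ne_zero (h : ∫⁻ s in Ioi 0, Φ s ≠ 0) :
    ∃ c, 0 < c ∧ ∫⁻ s in Icc c (2 * c), Φ s ≠ 0 := by
  by_contra! hzero
  have hcover : Ioi (0:ℝ) ⊆ ⋃ k : ℤ, Icc ((2:ℝ) ^ k) (2 * 2 ^ k) := fun u hu => by
    obtain ⟨k, hk⟩ := exists_mem_Ico_zpow (mem_Ioi.1 hu) one_lt_two
    exact mem_iUnion.2 ⟨k, hk.1, by rw [zpow_add_one₀ two_ne_zero, mul_comm] at hk; exact hk.2.le⟩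
  refine h (le_antisymm ?_ bot_le)
  calc ∫⁻ s in Ioi 0, Φ s ≤ ∫⁻ s in ⋃ k : ℤ, Icc ((2:ℝ) ^ k) (2 * 2 ^ k), Φ s :=
        lintegral_mono_set hcover
    _ ≤ ∑' k : ℤ, ∫⁻ s in Icc ((2:ℝ) ^ k) (2 * 2 ^ k), Φ s := lintegral_iUnion_le _ _
    _ = 0 := by simp [hzero _ (zpow_pos two_pos _)]

lemma ofReal_inv_mul_setLIntegral_Icc_two_mul_le (hΦ : Measurable Φ) {c : ℝ} (hc : 0 < c)
    (h : ∀ x, 0 < x → ∫⁻ s in Ioi 0, Φ s * windowAvg F (s * x) ≤ 3) {y : ℝ} (hy : 0 < y) :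
    ENNReal.ofReal y⁻¹ * ∫⁻ u in Icc y (2 * y), F u ≤ 3 / ∫⁻ s in Icc c (2 * c), Φ s := by
  set x := y / (2 * c)
  have hx : 0 < x := by positivity
  -- for `s ∈ [c, 2c]` the window `[s x, 4 s x]` contains `[y, 2 y] = [2 c x, 4 c x]`
  have hwin : ∀ s ∈ Icc c (2 * c),
      ENNReal.ofReal y⁻¹ * ∫⁻ u in Icc y (2 * y), F u ≤ windowAvg F (s * x) := by
    intro s hs
    have hsx : 0 < s * x := mul_pos (hc.trans_le hs.1) hx
    have hle : s * x ≤ y := by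
      calc s * x ≤ 2 * c * x := by gcongr; exact hs.2
        _ = y := by simp only [x]; field_simp
    have hge : 2 * y ≤ 4 * (s * x) := by
      calc 2 * y = 4 * (c * x) := by simp only [x]; field_simp; norm_num
        _ ≤ 4 * (s * x) := by gcongr; exact hs.1
    rw [windowAvg_eq hsx]
    exact mul_le_mul' (ENNReal.ofReal_le_ofReal (inv_anti₀ hsx hle))
      (lintegral_mono_set (Icc_subset_Icc hle hge))
  rw [ENNReal.le_div_iff_mul_le (Or.inr three_ne_zero) (Or.inr ENNReal.ofNat_ne_top), mul_comm,
    ← lintegral_mul_const _ hΦ]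
  calc ∫⁻ s in Icc c (2 * c), Φ s * (ENNReal.ofReal y⁻¹ * ∫⁻ u in Icc y (2 * y), F u)
      ≤ ∫⁻ s in Icc c (2 * c), Φ s * windowAvg F (s * x) :=
        setLIntegral_mono' measurableSet_Icc fun s hs => by gcongr; exact hwin s hs
    _ ≤ ∫⁻ s in Ioi 0, Φ s * windowAvg F (s * x) :=
        lintegral_mono_set fun s hs => hc.trans_le hs.1
    _ ≤ 3 := h x hx

lemma windowAvg_le_of_forall_setLIntegral_le (hΦ : Measurable Φ) {c : ℝ} (hc : 0 < c)
    (h : ∀ x, 0 < x → ∫⁻ s in Ioi 0, Φ s * windowAvg F (s * x) ≤ 3) {y : ℝ} (hy : 0 < y) :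
    windowAvg F y ≤ 9 / ∫⁻ s in Icc c (2 * c), Φ s := by
  set m := ∫⁻ s in Icc c (2 * c), Φ s
  have hsplit : ∫⁻ u in Icc y (4 * y), F u
      ≤ (∫⁻ u in Icc y (2 * y), F u) + ∫⁻ u in Icc (2 * y) (2 * (2 * y)), F u := by
    rw [← Icc_union_Icc_eq_Icc (b := 2 * y) (by linarith) (by linarith), ← mul_assoc,
      show (2:ℝ) * 2 = 4 by norm_num]
    exact lintegral_union_le _ _ _
  have hinv : ENNReal.ofReal y⁻¹ = 2 * ENNReal.ofReal (2 * y)⁻¹ := by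
    rw [← ENNReal.ofReal_ofNat 2, ← ENNReal.ofReal_mul zero_le_two]
    congr 1; field_simp
  calc windowAvg F y ≤ ENNReal.ofReal y⁻¹ * ((∫⁻ u in Icc y (2 * y), F u)
        + ∫⁻ u in Icc (2 * y) (2 * (2 * y)), F u) := by
        rw [windowAvg_eq hy]; gcongr
    _ = ENNReal.ofReal y⁻¹ * (∫⁻ u in Icc y (2 * y), F u)
        + 2 * (ENNReal.ofReal (2 * y)⁻¹ * ∫⁻ u in Icc (2 * y) (2 * (2 * y)), F u) := by
        rw [mul_add, hinv]; ring
    _ ≤ 3 / m + 2 * (3 / m) := by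
        gcongr <;> exact ofReal_inv_mul_setLIntegral_Icc_two_mul_le hΦ hc h (by positivity)
    _ = 9 / m := by rw [← one_add_mul, ← mul_div_assoc]; norm_num

lemma tendsto_setLIntegral_mul_windowAvg (hF : Measurable F) (hF2 : ∫⁻ u in Ioi 0, F u ^ 2 ≠ ∞)
    (hΦ : Measurable Φ) (hΦ1 : ∫⁻ s in Ioi 0, Φ s ≠ ∞) {C : ℝ≥0∞} (hC : C ≠ ∞)
    (hbdd : ∀ y, 0 < y → windowAvg F y ≤ C) :
    Tendsto (fun x => ∫⁻ s in Ioi 0, Φ s * windowAvg F (s * x)) atTop (𝓝 0) := by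
  have h := tendsto_lintegral_filter_of_dominated_convergence (fun s => Φ s * C)
    (Eventually.of_forall fun x => hΦ.mul (hF.windowAvg.comp (measurable_mul_const x)))
    ((eventually_gt_atTop 0).mono fun x hx => (ae_restrict_iff' measurableSet_Ioi).2 <|
      ae_of_all _ fun s hs => mul_le_mul_of_nonneg_left (hbdd _ (mul_pos hs hx)) bot_le)
    (by rw [lintegral_mul_const _ hΦ]; exact ENNReal.mul_ne_top hΦ1 hC)
    (by
      filter_upwards [ae_lt_top hΦ hΦ1, ae_restrict_mem measurableSet_Ioi] with s hs_fin hs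
      exact ENNReal.Tendsto.const_mul ((tendsto_windowAvg_atTop hF hF2).comp
        (tendsto_id.const_mul_atTop hs)) (Or.inr hs_fin.ne))
  simpa using h

theorem not_ae_setLIntegral_mul_comp_mul_eq_one (hF : Measurable F)
    (hF2 : ∫⁻ u in Ioi 0, F u ^ 2 ≠ ∞) (hΦ : Measurable Φ) (hΦ1 : ∫⁻ s in Ioi 0, Φ s ≠ ∞) :
    ¬ ∀ᵐ t ∂(volume.restrict (Ioi 0)), ∫⁻ s in Ioi 0, Φ s * F (s * t) = 1 := by
  intro h
  have h3 : ∀ x, 0 < x → ∫⁻ s in Ioi 0, Φ s * windowAvg F (s * x) = 3 :=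
    fun x hx => setLIntegral_mul_windowAvg_eq_three hF hΦ h hx
  have hΦ0 : ∫⁻ s in Ioi 0, Φ s ≠ 0 := by
    intro h0
    have hz : (fun s => Φ s * windowAvg F (s * 1)) =ᵐ[volume.restrict (Ioi 0)] 0 := by
      filter_upwards [(lintegral_eq_zero_iff hΦ).1 h0] with s hs
      simp [hs]
    have h31 := h3 1 one_pos
    rw [lintegral_congr_ae hz] at h31
    simp at h31
  obtain ⟨c, hc, hm⟩ := exists_setLIntegral_Icc_two_mul_ne_zero hΦ0
  have hlim := tendsto_setLIntegral_mul_windowAvg hF hF2 hΦ hΦ1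
    (ENNReal.div_ne_top ENNReal.ofNat_ne_top hm)
    fun y hy => windowAvg_le_of_forall_setLIntegral_le hΦ hc (fun x hx => (h3 x hx).le) hy
  exact three_ne_zero <| tendsto_nhds_unique tendsto_const_nhds <|
    hlim.congr' ((eventually_gt_atTop 0).mono h3)

end windowAvg

lemma one_third_le_of_ofReal_le {g : ℝ → ℝ} {A : ℝ≥0∞} (hA0 : A ≠ 0) (hA : A ≠ ∞)
    (hg : ∀ t, 0 < t → ENNReal.ofReal (g t) ≤ A ^ (1/2 : ℝ) * ENNReal.ofReal (t ^ (-(1/2) : ℝ))) :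
    1/3 ≤ A ^ (1/2 : ℝ) *
      (1/2 * ∫⁻ t in Ioi 0, ENNReal.ofReal ((1 - g t) ^ 2 * t ^ (-(3/2) : ℝ))) := by
  set r := (A ^ (1/2 : ℝ)).toReal
  have hr : 0 < r := ENNReal.toReal_pos (by simp [hA0]) (by simp [hA])
  have har : A ^ (1/2 : ℝ) = ENNReal.ofReal r := (ENNReal.ofReal_toReal (by simp [hA])).symm
  have hgr : ∀ t, 0 < t → g t ≤ r * t ^ (-(1/2) : ℝ) := fun t ht => by
    have := hg t ht
    rwa [har, ← ENNReal.ofReal_mul hr.le, ENNReal.ofReal_le_ofReal_iff (by positivity)] at this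
  have hpt : ∀ t ∈ Ioi (r ^ 2), ENNReal.ofReal ((1 - r * t ^ (-(1/2) : ℝ)) ^ 2 * t ^ (-(3/2) : ℝ))
      ≤ ENNReal.ofReal ((1 - g t) ^ 2 * t ^ (-(3/2) : ℝ)) := by
    intro t ht
    have ht0 : 0 < t := (pow_pos hr 2).trans ht
    have hle : r * t ^ (-(1/2) : ℝ) ≤ 1 := by
      rw [Real.rpow_neg ht0.le, ← Real.sqrt_eq_rpow, ← div_eq_mul_inv,
        div_le_one (Real.sqrt_pos.2 ht0)]
      exact Real.le_sqrt_of_sq_le ht.le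
    have hsq : (1 - r * t ^ (-(1/2) : ℝ)) ^ 2 ≤ (1 - g t) ^ 2 :=
      pow_le_pow_left₀ (sub_nonneg.2 hle) (by linarith [hgr t ht0]) 2
    exact ENNReal.ofReal_le_ofReal (mul_le_mul_of_nonneg_right hsq (by positivity))
  have hB : ENNReal.ofReal (2 / (3 * r))
      ≤ ∫⁻ t in Ioi 0, ENNReal.ofReal ((1 - g t) ^ 2 * t ^ (-(3/2) : ℝ)) := by
    rw [← setLIntegral_Ioi_sq_one_sub_mul_rpow hr]
    exact (setLIntegral_mono' measurableSet_Ioi hpt).trans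
      (lintegral_mono_set (Ioi_subset_Ioi (sq_nonneg r)))
  calc (1/3 : ℝ≥0∞) = ENNReal.ofReal (r * (1/2 * (2 / (3 * r)))) := by
        rw [show r * (1/2 * (2 / (3 * r))) = 1/3 by field_simp,
          ENNReal.ofReal_div_of_pos three_pos]
        simp
    _ = A ^ (1/2 : ℝ) * (1/2 * ENNReal.ofReal (2 / (3 * r))) := by
        rw [har, ENNReal.ofReal_mul hr.le, ENNReal.ofReal_mul (by norm_num),
          ENNReal.ofReal_div_of_pos two_pos]
        simp
    _ ≤ _ := by gcongr

lemma ofReal_setIntegral_mul_comp_mul_le {f φ : ℝ → ℝ} (hf : Measurable f) (hφ : Measurable φ)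
    (hf0 : ∀ t ∈ Ioi (0:ℝ), 0 ≤ f t) (hφ0 : ∀ s ∈ Ioi (0:ℝ), 0 ≤ φ s) {t : ℝ} (ht : 0 < t) :
    ENNReal.ofReal (∫ s in Ioi 0, φ s * f (s * t))
      ≤ (∫⁻ s in Ioi 0, ENNReal.ofReal (φ s ^ 2)) ^ (1/2 : ℝ) *
        (∫⁻ u in Ioi 0, ENNReal.ofReal (f u ^ 2)) ^ (1/2 : ℝ) * ENNReal.ofReal (t ^ (-(1/2) : ℝ)) :=
  calc ENNReal.ofReal (∫ s in Ioi 0, φ s * f (s * t))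
      ≤ ∫⁻ s in Ioi 0, ENNReal.ofReal (φ s * f (s * t)) :=
        ofReal_integral_le_lintegral_ofReal <| (ae_restrict_iff' measurableSet_Ioi).2 <|
          ae_of_all _ fun s hs => mul_nonneg (hφ0 s hs) (hf0 _ (mul_pos hs ht))
    _ = ∫⁻ s in Ioi 0, ENNReal.ofReal (φ s) * ENNReal.ofReal (f (s * t)) :=
        setLIntegral_congr_fun measurableSet_Ioi fun s hs => ENNReal.ofReal_mul (hφ0 s hs)
    _ ≤ _ := setLIntegral_mul_comp_mul_le hf.ennreal_ofReal hφ.ennreal_ofReal ht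
    _ = _ := by
        rw [setLIntegral_congr_fun measurableSet_Ioi fun u hu => ENNReal.ofReal_pow (hf0 u hu) 2,
          setLIntegral_congr_fun measurableSet_Ioi fun s hs => ENNReal.ofReal_pow (hφ0 s hs) 2]

lemma ae_eq_one_of_setLIntegral_eq_zero {g : ℝ → ℝ} (hg : Measurable g)
    (h : ∫⁻ t in Ioi 0, ENNReal.ofReal ((1 - g t) ^ 2 * t ^ (-(3/2) : ℝ)) = 0) :
    ∀ᵐ t ∂(volume.restrict (Ioi 0)), g t = 1 := by
  rw [lintegral_eq_zero_iff (by fun_prop)] at h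
  filter_upwards [h, ae_restrict_mem measurableSet_Ioi] with t ht ht0
  have hsq : (1 - g t) ^ 2 = 0 := le_antisymm
    (nonpos_of_mul_nonpos_left (ENNReal.ofReal_eq_zero.1 ht) (Real.rpow_pos_of_pos ht0 _))
    (sq_nonneg _)
  linarith [pow_eq_zero_iff two_ne_zero |>.1 hsq]

lemma setLIntegral_one_sub_sq_ne_zero {f φ : ℝ → ℝ} (hf : Measurable f) (hφ : Measurable φ)
    (hf0 : ∀ t ∈ Ioi (0:ℝ), 0 ≤ f t) (hφ0 : ∀ s ∈ Ioi (0:ℝ), 0 ≤ φ s)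
    (hf2 : IntegrableOn (fun t => f t ^ 2) (Ioi 0)) (hφ1 : IntegrableOn φ (Ioi 0)) :
    ∫⁻ t in Ioi 0, ENNReal.ofReal ((1 - ∫ s in Ioi 0, φ s * f (s * t)) ^ 2 * t ^ (-(3/2) : ℝ))
      ≠ 0 := by
  intro h
  have hg : Measurable fun t => ∫ s in Ioi 0, φ s * f (s * t) :=
    ((hφ.comp measurable_snd).mul (hf.comp (measurable_snd.mul measurable_fst))
      ).stronglyMeasurable.integral_prod_right'.measurable
  have hF2 : ∫⁻ u in Ioi 0, ENNReal.ofReal (f u) ^ 2 ≠ ∞ := by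
    rw [setLIntegral_congr_fun measurableSet_Ioi fun u hu => (ENNReal.ofReal_pow (hf0 u hu) 2).symm]
    exact hf2.lintegral_lt_top.ne
  refine not_ae_setLIntegral_mul_comp_mul_eq_one hf.ennreal_ofReal hF2 hφ.ennreal_ofReal
    hφ1.lintegral_lt_top.ne ?_
  filter_upwards [ae_eq_one_of_setLIntegral_eq_zero hg h, ae_restrict_mem measurableSet_Ioi]
    with t hgt ht
  have hnn : 0 ≤ᵐ[volume.restrict (Ioi 0)] fun s => φ s * f (s * t) :=
    (ae_restrict_iff' measurableSet_Ioi).2 <|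
      ae_of_all _ fun s hs => mul_nonneg (hφ0 s hs) (hf0 _ (mul_pos hs (mem_Ioi.1 ht)))
  rw [← setLIntegral_congr_fun measurableSet_Ioi fun s hs => ENNReal.ofReal_mul (hφ0 s hs),
    lintegral_ofReal_eq_ofReal_integral hnn (by simp [hgt]), hgt, ENNReal.ofReal_one]

theorem stmt_14 :
    (1/3 : ℝ≥0∞) ≤ sInf {x : ℝ≥0∞ | ∃ f φ : ℝ → ℝ, Measurable f ∧ Measurable φ ∧
      (∀ t ∈ Ioi (0:ℝ), 0 ≤ f t) ∧ (∀ s ∈ Ioi (0:ℝ), 0 ≤ φ s) ∧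
      (∫ t in Ioi (0:ℝ), (f t)^2) = 1 ∧ (∫ s in Ioi (0:ℝ), φ s) = 1 ∧
      x = (∫⁻ s in Ioi (0:ℝ), ENNReal.ofReal ((φ s)^2)) ^ (1/2 : ℝ) *
          ((1/2 : ℝ≥0∞) * ∫⁻ t in Ioi (0:ℝ), ENNReal.ofReal
            ((1 - ∫ s in Ioi (0:ℝ), φ s * f (s * t))^2 * t ^ (-(3/2) : ℝ)))} := by
  refine le_sInf ?_
  rintro _ ⟨f, φ, hf, hφ, hf0, hφ0, hf2, hφ1, rfl⟩
  have hf2i : IntegrableOn (fun t => f t ^ 2) (Ioi 0) :=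
    Integrable.of_integral_ne_zero (by simp [hf2])
  have hF2 : ∫⁻ u in Ioi 0, ENNReal.ofReal (f u ^ 2) = 1 := by
    rw [← ofReal_integral_eq_lintegral_ofReal hf2i (ae_of_all _ fun _ => sq_nonneg _), hf2,
      ENNReal.ofReal_one]
  have hg : ∀ t, 0 < t → ENNReal.ofReal (∫ s in Ioi 0, φ s * f (s * t))
      ≤ (∫⁻ s in Ioi 0, ENNReal.ofReal (φ s ^ 2)) ^ (1/2 : ℝ) * ENNReal.ofReal (t ^ (-(1/2) : ℝ)) :=
    fun t ht => by simpa [hF2] using ofReal_setIntegral_mul_comp_mul_le hf hφ hf0 hφ0 ht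
  by_cases hA : ∫⁻ s in Ioi 0, ENNReal.ofReal (φ s ^ 2) = ∞
  · have hB := setLIntegral_one_sub_sq_ne_zero hf hφ hf0 hφ0 hf2i
      (Integrable.of_integral_ne_zero (by simp [hφ1]))
    rw [hA, ENNReal.top_rpow_of_pos (by norm_num), ENNReal.top_mul (mul_ne_zero (by norm_num) hB)]
    exact le_top
  · exact one_third_le_of_ofReal_le (lintegral_ofReal_sq_ne_zero hφ.aemeasurable (by simp [hφ1]))
      hA hg
end
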